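/- In the Yang–Baxter graph G_λ, every directed path from the root (labeled by the zero weight 0^N) to a vertex with weight v has the same number of 'steps', namely |v| + S(v), where |v| = Σ_i v[i] and S(v) = Σ_{i<j} ε(v[i] − v[j]) with ε(x) = (|x| + |x+1| − 1)/2. In particular all paths joining two given vertices have the same length. -/

import Mathlib

/-- `ε(x) = (|x| + |x+1| − 1)/2`. -/
def epsInt (x : ℤ) : ℤ := (|x| + |x + 1| - 1) / 2

/-- `S(v) = Σ_{1 ≤ i < j ≤ N} ε(v[i] − v[j])`. -/
def Sstat {N : ℕ} (v : Fin N → ℕ) : ℤ :=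
  ∑ p ∈ Finset.univ.filter (fun p : Fin N × Fin N => p.1 < p.2),
    epsInt ((v p.1 : ℤ) - (v p.2 : ℤ))

/-- The affine operation `vΨ = (v[2], ..., v[N], v[1] + 1)`. -/
def vPsi {n : ℕ} (v : Fin (n + 1) → ℕ) : Fin (n + 1) → ℕ :=
  fun k => if h : (k : ℕ) + 1 < n + 1 then v ⟨(k : ℕ) + 1, h⟩ else v 0 + 1

/-- A `step` of the Yang–Baxter graph on the weight labels: either `v ↦ v s_m`
with `v[m] < v[m+1]`, or the affine step `v ↦ vΨ`.  (Jump edges do not change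
the weight.) -/
def WStep {n : ℕ} (v v' : Fin (n + 1) → ℕ) : Prop :=
  (∃ m j : Fin (n + 1), (j : ℕ) = (m : ℕ) + 1 ∧ v m < v j ∧
      v' = fun k => v (Equiv.swap m j k)) ∨
  v' = vPsi v


/-!
The quantity `|v| + S(v)` goes up by exactly one along every step. For `v ↦ v s_m` the sum
`|v|` is unchanged and, since `ε(x) = ε(-x) + 1` for `x > 0`, only the pair `(m, m+1)` changes
its contribution to `S`. For `v ↦ vΨ` the sum grows by one, while `S` is unchanged because
`ε(x - 1) = ε(-x)` absorbs the `+1` on the entry that moves from the front to the back.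
In both cases the remaining pairs are only permuted among themselves.
-/

lemma epsInt_sub_one (x : ℤ) : epsInt (x - 1) = epsInt (-x) := by
  unfold epsInt
  rw [abs_neg, show -x + 1 = -(x - 1) by ring, abs_neg, sub_add_cancel, add_comm]

lemma epsInt_of_pos {x : ℤ} (hx : 0 < x) : epsInt x = epsInt (-x) + 1 := by
  unfold epsInt
  rw [abs_of_pos hx, abs_of_pos (by omega : 0 < x + 1), abs_neg, abs_of_pos hx,
    abs_of_nonpos (by omega : -x + 1 ≤ 0)]
  omega

section PermPair

variable {α : Type*} [LinearOrder α]

def permPair (σ : Equiv.Perm α) (p : α × α) : α × α :=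
  (min (σ p.1) (σ p.2), max (σ p.1) (σ p.2))

lemma permPair_of_lt {σ : Equiv.Perm α} {p : α × α} (h : σ p.1 < σ p.2) :
    permPair σ p = (σ p.1, σ p.2) := by
  simp [permPair, h.le]

lemma permPair_fst_lt_snd (σ : Equiv.Perm α) {p : α × α} (hp : p.1 < p.2) :
    (permPair σ p).1 < (permPair σ p).2 :=
  min_lt_max.mpr (σ.injective.ne hp.ne)

lemma permPair_inv_permPair (σ : Equiv.Perm α) {p : α × α} (hp : p.1 ≤ p.2) :
    permPair σ⁻¹ (permPair σ p) = p := by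
  obtain ⟨a, b⟩ := p
  rcases le_total (σ a) (σ b) with h | h <;> simp [permPair, h, hp]

lemma sum_lt_pairs_permPair [Fintype α] (σ : Equiv.Perm α) (F : α × α → ℤ) :
    ∑ p ∈ Finset.univ.filter (fun p : α × α => p.1 < p.2), F (permPair σ p) =
      ∑ p ∈ Finset.univ.filter (fun p : α × α => p.1 < p.2), F p := by
  refine Finset.sum_nbij' (permPair σ) (permPair σ⁻¹) ?_ ?_ ?_ ?_ (fun _ _ => rfl) <;>
    simp only [Finset.mem_filter, Finset.mem_univ, true_and]
  · exact fun p hp => permPair_fst_lt_snd σ hp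
  · exact fun p hp => permPair_fst_lt_snd σ⁻¹ hp
  · exact fun p hp => permPair_inv_permPair σ hp.le
  · exact fun p hp => by simpa using permPair_inv_permPair σ⁻¹ hp.le

end PermPair

lemma Fin.swap_lt_swap_of_lt {N : ℕ} {m j a b : Fin N} (hj : (j : ℕ) = m + 1) (hab : a < b)
    (hne : (a, b) ≠ (m, j)) : Equiv.swap m j a < Equiv.swap m j b := by
  rw [Equiv.swap_apply_def, Equiv.swap_apply_def]
  simp only [ne_eq, Prod.mk.injEq, Fin.lt_def, Fin.ext_iff] at hab hne ⊢
  split_ifs <;> omega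

lemma Sstat_swap {N : ℕ} (v : Fin N → ℕ) {m j : Fin N} (hj : (j : ℕ) = m + 1)
    (hv : v m < v j) : Sstat (fun k => v (Equiv.swap m j k)) = Sstat v + 1 := by
  set G : Fin N × Fin N → ℤ := fun q => epsInt ((v q.1 : ℤ) - v q.2)
  have hmj : m < j := Fin.lt_def.mpr (by omega)
  have hterm : ∀ p ∈ Finset.univ.filter (fun p : Fin N × Fin N => p.1 < p.2),
      epsInt ((v (Equiv.swap m j p.1) : ℤ) - v (Equiv.swap m j p.2)) =
        G (permPair (Equiv.swap m j) p) + if p = (m, j) then 1 else 0 := by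
    rintro ⟨a, b⟩ hab
    simp only [Finset.mem_filter, Finset.mem_univ, true_and] at hab
    by_cases hp : (a, b) = (m, j)
    · obtain ⟨rfl, rfl⟩ := Prod.mk.inj hp
      have hperm : permPair (Equiv.swap a b) (a, b) = (a, b) := by
        simp [permPair, hab.le]
      rw [hperm, if_pos rfl, Equiv.swap_apply_left, Equiv.swap_apply_right,
        epsInt_of_pos (by omega), neg_sub]
    · rw [permPair_of_lt (Fin.swap_lt_swap_of_lt hj hab hp), if_neg hp, add_zero]
  rw [Sstat, Finset.sum_congr rfl hterm, Finset.sum_add_distrib, sum_lt_pairs_permPair,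
    Finset.sum_ite_eq', if_pos (by simpa using hmj)]
  rfl

lemma vPsi_apply {n : ℕ} (v : Fin (n + 1) → ℕ) (i : Fin (n + 1)) :
    vPsi v i = v (finRotate (n + 1) i) + if i = Fin.last n then 1 else 0 := by
  by_cases hi : i = Fin.last n
  · subst hi
    simp [vPsi]
  · have hlt : (i : ℕ) < n := Fin.val_lt_last hi
    simp only [vPsi, dif_pos (by omega : (i : ℕ) + 1 < n + 1), if_neg hi, add_zero]
    congr 1
    exact Fin.ext (coe_finRotate_of_ne_last hi).symm

lemma sum_vPsi {n : ℕ} (v : Fin (n + 1) → ℕ) :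
    ∑ i, (vPsi v i : ℤ) = ∑ i, (v i : ℤ) + 1 := by
  simp only [vPsi_apply, Nat.cast_add, Finset.sum_add_distrib,
    Equiv.sum_comp (finRotate (n + 1)) (fun i => (v i : ℤ))]
  simp

lemma Sstat_vPsi {n : ℕ} (v : Fin (n + 1) → ℕ) : Sstat (vPsi v) = Sstat v := by
  set ρ := finRotate (n + 1)
  set G : Fin (n + 1) × Fin (n + 1) → ℤ := fun q => epsInt ((v q.1 : ℤ) - v q.2)
  have hterm : ∀ p ∈ Finset.univ.filter (fun p : Fin (n + 1) × Fin (n + 1) => p.1 < p.2),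
      epsInt ((vPsi v p.1 : ℤ) - vPsi v p.2) = G (permPair ρ p) := by
    rintro ⟨a, b⟩ hab
    simp only [Finset.mem_filter, Finset.mem_univ, true_and] at hab
    have ha : a ≠ Fin.last n := (hab.trans_le (Fin.le_last b)).ne
    have hρa : (ρ a : ℕ) = a + 1 := coe_finRotate_of_ne_last ha
    by_cases hb : b = Fin.last n
    · subst hb
      have hperm : permPair ρ (a, Fin.last n) = (0, ρ a) := by
        simp [permPair, ρ]
      rw [hperm, vPsi_apply, vPsi_apply, if_neg ha, if_pos rfl, finRotate_last]
      push_cast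
      rw [add_zero, ← sub_sub, epsInt_sub_one, neg_sub]
    · have hρb : (ρ b : ℕ) = b + 1 := coe_finRotate_of_ne_last hb
      rw [permPair_of_lt (Fin.lt_def.mpr (by rw [hρa, hρb]; exact Nat.succ_lt_succ hab)),
        vPsi_apply, vPsi_apply, if_neg ha, if_neg hb, add_zero, add_zero]
  rw [Sstat, Finset.sum_congr rfl hterm, sum_lt_pairs_permPair ρ G]
  rfl

def stepCount {n : ℕ} (v : Fin (n + 1) → ℕ) : ℤ := ∑ i, (v i : ℤ) + Sstat v

lemma stepCount_zero {n : ℕ} : stepCount (fun _ : Fin (n + 1) => 0) = 0 := by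
  simp [stepCount, Sstat, epsInt]

lemma stepCount_of_wStep {n : ℕ} {v v' : Fin (n + 1) → ℕ} (h : WStep v v') :
    stepCount v' = stepCount v + 1 := by
  rcases h with ⟨m, j, hj, hv, rfl⟩ | rfl
  · rw [stepCount, stepCount, Sstat_swap v hj hv,
      Equiv.sum_comp (Equiv.swap m j) (fun i => (v i : ℤ)), add_assoc]
  · rw [stepCount, stepCount, sum_vPsi, Sstat_vPsi, add_right_comm]

lemma stepCount_of_path {n : ℕ} {c : ℕ → Fin (n + 1) → ℕ} {k : ℕ}
    (h : ∀ t, t < k → WStep (c t) (c (t + 1))) : stepCount (c k) = stepCount (c 0) + k := by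
  induction k with
  | zero => simp
  | succ k ih =>
    rw [stepCount_of_wStep (h k k.lt_succ_self), ih (fun t ht => h t (ht.trans k.lt_succ_self))]
    push_cast
    ring

/-- Every path of steps from the zero weight `0^N` to `v` has length
`|v| + S(v)`; in particular all paths of steps joining two given weights have
the same length. -/
theorem steps_count_eq_and_path_length_unique {n : ℕ} :
    (∀ (v : Fin (n + 1) → ℕ) (k : ℕ) (c : ℕ → Fin (n + 1) → ℕ),
      c 0 = (fun _ => 0) → (∀ t, t < k → WStep (c t) (c (t + 1))) → c k = v →
      (k : ℤ) = (∑ i, (v i : ℤ)) + Sstat v) ∧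
    (∀ (u v : Fin (n + 1) → ℕ) (k₁ k₂ : ℕ)
      (c₁ c₂ : ℕ → Fin (n + 1) → ℕ),
      c₁ 0 = u → c₂ 0 = u →
      (∀ t, t < k₁ → WStep (c₁ t) (c₁ (t + 1))) →
      (∀ t, t < k₂ → WStep (c₂ t) (c₂ (t + 1))) →
      c₁ k₁ = v → c₂ k₂ = v → k₁ = k₂) := by
  refine ⟨fun v k c h0 hpath hk => ?_, fun u v k₁ k₂ c₁ c₂ h₁0 h₂0 hpath₁ hpath₂ hk₁ hk₂ => ?_⟩
  · have h := stepCount_of_path hpath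
    rw [h0, hk, stepCount_zero, zero_add] at h
    exact h.symm
  · have h₁ := stepCount_of_path hpath₁
    have h₂ := stepCount_of_path hpath₂
    rw [h₁0, hk₁] at h₁
    rw [h₂0, hk₂] at h₂
    exact_mod_cast add_left_cancel (h₁.symm.trans h₂)
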